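/- Fix d ≥ 1 and a nonempty action set A. On ℝ^d = EuclideanSpace ℝ (Fin d), let b : ℝ^d × A → ℝ^d and Q : ℝ^d × A → Matrix (Fin d) (Fin d) ℝ, and for twice continuously differentiable f define (L^a f)(s) = ⟪b(s,a), ∇f(s)⟫ + (1/2)·trace(Q(s,a) · Hess f(s)). Let g : ℝ^d → ℝ^d be twice continuously differentiable, fix s ∈ ℝ^d and a, ã ∈ A, and assume Q(s,a) and Q(g(s), ã) are symmetric. Suppose for every twice continuously differentiable f : ℝ^d → ℝ: (L^a (f ∘ g))(s) = (L^{ã} f)(g(s)). Then, writing J for the Jacobian matrix of g at s and g_k for the k-th component of g: Q(g(s), ã) = J · Q(s,a) · Jᵀ, and b(g(s), ã) = J · b(s,a) + (1/2) c, where c ∈ ℝ^d has components c_k = trace( Q(s,a) · Hess g_k(s) ). -/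

import Mathlib

open RealInnerProductSpace

/-- The Hessian matrix of second partial derivatives of `f` at `s`. -/
noncomputable def hessMat {d : ℕ} (f : EuclideanSpace ℝ (Fin d) → ℝ)
    (s : EuclideanSpace ℝ (Fin d)) : Matrix (Fin d) (Fin d) ℝ :=
  fun i j =>
    iteratedFDeriv ℝ 2 f s ![EuclideanSpace.single i 1, EuclideanSpace.single j 1]

/-- The controlled second-order generator
`(L^a f)(s) = ⟪b(s,a), ∇f(s)⟫ + (1/2)·trace(Q(s,a)·Hess f(s))`. -/
noncomputable def gen {d : ℕ} {A : Type*}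
    (b : EuclideanSpace ℝ (Fin d) × A → EuclideanSpace ℝ (Fin d))
    (Q : EuclideanSpace ℝ (Fin d) × A → Matrix (Fin d) (Fin d) ℝ)
    (a : A) (f : EuclideanSpace ℝ (Fin d) → ℝ) (s : EuclideanSpace ℝ (Fin d)) : ℝ :=
  ⟪b (s, a), gradient f s⟫ + (1 / 2) * (Q (s, a) * hessMat f s).trace

/-- The Hamiltonian `H[f](s) = ⨆_a ( r(s,a) + (L^a f)(s) )`. -/
noncomputable def ham {d : ℕ} {A : Type*}
    (b : EuclideanSpace ℝ (Fin d) × A → EuclideanSpace ℝ (Fin d))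
    (Q : EuclideanSpace ℝ (Fin d) × A → Matrix (Fin d) (Fin d) ℝ)
    (r : EuclideanSpace ℝ (Fin d) × A → ℝ)
    (f : EuclideanSpace ℝ (Fin d) → ℝ) (s : EuclideanSpace ℝ (Fin d)) : ℝ :=
  ⨆ a : A, (r (s, a) + gen b Q a f s)

open Matrix

/-- The Jacobian matrix of a map `g : ℝ^d → ℝ^d` at `s`. -/
noncomputable def jacMat {d : ℕ} (g : EuclideanSpace ℝ (Fin d) → EuclideanSpace ℝ (Fin d))
    (s : EuclideanSpace ℝ (Fin d)) : Matrix (Fin d) (Fin d) ℝ :=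
  fun i j => fderiv ℝ g s (EuclideanSpace.single j 1) i

/-!
Testing the equivariance against the coordinate functions `y ↦ y k`, whose Hessians vanish,
reads off the drift identity. Against the quadratics `y ↦ y i * y j`, the Leibniz rule
`L(f h) = f L h + h L f + ⟪∇f, Q ∇h⟫` (for symmetric `Q`), applied on both sides, leaves
`⟪∇g_i, Q ∇g_j⟫ = Q'_{ij}` once the first-order terms cancel by the drift identity; as `∇g_i`
is the `i`-th row of the Jacobian, this is the diffusion identity.
-/

section Gradient

variable {F : Type*} [NormedAddCommGroup F] [InnerProductSpace ℝ F] [CompleteSpace F]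

lemma real_inner_gradient_right (f : F → ℝ) (x v : F) : ⟪v, gradient f x⟫ = fderiv ℝ f x v := by
  simp [inner_gradient_right]

lemma gradient_fun_mul {f h : F → ℝ} {x : F} (hf : DifferentiableAt ℝ f x)
    (hh : DifferentiableAt ℝ h x) :
    gradient (fun y => f y * h y) x = f x • gradient h x + h x • gradient f x := by
  simp [gradient, fderiv_fun_mul hf hh]

end Gradient

lemma Matrix.trace_mul_vecMulVec {n R : Type*} [Fintype n] [CommSemiring R]
    (Q : Matrix n n R) (u v : n → R) : (Q * vecMulVec u v).trace = v ⬝ᵥ Q *ᵥ u := by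
  rw [mul_vecMulVec, trace_vecMulVec, dotProduct_comm]

lemma Matrix.IsSymm.dotProduct_mulVec_comm {n R : Type*} [Fintype n] [CommSemiring R]
    {Q : Matrix n n R} (hQ : Q.IsSymm) (u v : n → R) : v ⬝ᵥ Q *ᵥ u = u ⬝ᵥ Q *ᵥ v := by
  rw [dotProduct_mulVec, dotProduct_comm, ← vecMul_transpose, hQ.eq]

section Euclidean

variable {d : ℕ}

local notation "E" => EuclideanSpace ℝ (Fin d)

lemma EuclideanSpace.gradient_apply (f : E → ℝ) (x : E) (i : Fin d) :
    gradient f x i = fderiv ℝ f x (EuclideanSpace.single i 1) := by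
  rw [← real_inner_gradient_right, EuclideanSpace.inner_single_left]
  simp

lemma hessMat_apply (f : E → ℝ) (x : E) (i j : Fin d) :
    hessMat f x i j
      = fderiv ℝ (fderiv ℝ f) x (EuclideanSpace.single i 1) (EuclideanSpace.single j 1) := by
  simp [hessMat, iteratedFDeriv_two_apply]

lemma hessMat_fun_mul {f h : E → ℝ} (hf : ContDiff ℝ 2 f) (hh : ContDiff ℝ 2 h) (x : E) :
    hessMat (fun y => f y * h y) x
      = f x • hessMat h x + h x • hessMat f x
        + vecMulVec (gradient f x).ofLp (gradient h x).ofLp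
        + vecMulVec (gradient h x).ofLp (gradient f x).ofLp := by
  have hf1 : Differentiable ℝ f := hf.differentiable two_ne_zero
  have hh1 : Differentiable ℝ h := hh.differentiable two_ne_zero
  have hf2 : Differentiable ℝ (fderiv ℝ f) :=
    (hf.fderiv_right (m := 1) le_rfl).differentiable one_ne_zero
  have hh2 : Differentiable ℝ (fderiv ℝ h) :=
    (hh.fderiv_right (m := 1) le_rfl).differentiable one_ne_zero
  have hD : fderiv ℝ (fun y => f y * h y) = fun y => f y • fderiv ℝ h y + h y • fderiv ℝ f y :=
    funext fun y => fderiv_fun_mul (hf1 y) (hh1 y)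
  have hfh : DifferentiableAt ℝ (fun y => f y • fderiv ℝ h y) x := (hf1 x).smul (hh2 x)
  have hhf : DifferentiableAt ℝ (fun y => h y • fderiv ℝ f y) x := (hh1 x).smul (hf2 x)
  ext i j
  rw [hessMat_apply, hD, fderiv_fun_add hfh hhf,
    fderiv_fun_smul (hf1 x) (hh2 x), fderiv_fun_smul (hh1 x) (hf2 x)]
  simp [hessMat_apply, EuclideanSpace.gradient_apply, vecMulVec_apply]
  ring

lemma gradient_coord (k : Fin d) (x : E) :
    (gradient (fun y : E => y k) x).ofLp = Pi.single k 1 := by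
  ext q
  rw [EuclideanSpace.gradient_apply, (PiLp.hasFDerivAt_apply 2 x k).fderiv]
  simp [Pi.single_apply, eq_comm]

lemma hessMat_coord (k : Fin d) (x : E) : hessMat (fun y : E => y k) x = 0 := by
  have hD : fderiv ℝ (fun y : E => y k) = fun _ => PiLp.proj 2 _ k :=
    funext fun y => (PiLp.hasFDerivAt_apply 2 y k).fderiv
  ext i j
  simp [hessMat_apply, hD]

lemma gradient_component {g : E → E} {x : E} (hg : DifferentiableAt ℝ g x) (k : Fin d) :
    (gradient (fun y => g y k) x).ofLp = jacMat g x k := by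
  ext q
  have hD : HasFDerivAt (fun y => g y k) ((PiLp.proj 2 _ k).comp (fderiv ℝ g x)) x :=
    HasFDerivAt.comp (g := fun z : E => z k) x (PiLp.hasFDerivAt_apply 2 (g x) k) hg.hasFDerivAt
  rw [EuclideanSpace.gradient_apply, hD.fderiv]
  rfl

end Euclidean

section Generator

variable {d : ℕ} {A : Type*} (b : EuclideanSpace ℝ (Fin d) × A → EuclideanSpace ℝ (Fin d))
  (Q : EuclideanSpace ℝ (Fin d) × A → Matrix (Fin d) (Fin d) ℝ) (a : A)

lemma gen_coord (k : Fin d) (x : EuclideanSpace ℝ (Fin d)) :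
    gen b Q a (fun y => y k) x = b (x, a) k := by
  rw [gen, real_inner_gradient_right, (PiLp.hasFDerivAt_apply 2 x k).fderiv, hessMat_coord]
  simp

lemma gen_component {g : EuclideanSpace ℝ (Fin d) → EuclideanSpace ℝ (Fin d)}
    {x : EuclideanSpace ℝ (Fin d)} (hg : DifferentiableAt ℝ g x) (k : Fin d) :
    gen b Q a (fun y => g y k) x
      = (jacMat g x *ᵥ b (x, a)) k + (1 / 2) * (Q (x, a) * hessMat (fun y => g y k) x).trace := by
  rw [gen, EuclideanSpace.inner_eq_star_dotProduct, gradient_component hg]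
  rfl

lemma gen_fun_mul {f h : EuclideanSpace ℝ (Fin d) → ℝ} (hf : ContDiff ℝ 2 f)
    (hh : ContDiff ℝ 2 h) (x : EuclideanSpace ℝ (Fin d)) :
    gen b Q a (fun y => f y * h y) x
      = f x * gen b Q a h x + h x * gen b Q a f x
        + (1 / 2) * ((gradient f x).ofLp ⬝ᵥ Q (x, a) *ᵥ (gradient h x).ofLp
          + (gradient h x).ofLp ⬝ᵥ Q (x, a) *ᵥ (gradient f x).ofLp) := by
  simp only [gen, gradient_fun_mul (hf.differentiable two_ne_zero x)
      (hh.differentiable two_ne_zero x), hessMat_fun_mul hf hh, inner_add_right,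
    inner_smul_right, Matrix.mul_add, Matrix.mul_smul, trace_add, trace_smul,
    trace_mul_vecMulVec, smul_eq_mul]
  ring

end Generator

theorem stmt_14_general {d : ℕ} {A : Type*}
    (b : EuclideanSpace ℝ (Fin d) × A → EuclideanSpace ℝ (Fin d))
    (Q : EuclideanSpace ℝ (Fin d) × A → Matrix (Fin d) (Fin d) ℝ)
    (g : EuclideanSpace ℝ (Fin d) → EuclideanSpace ℝ (Fin d))
    (hg : ContDiff ℝ 2 g)
    (s : EuclideanSpace ℝ (Fin d)) (a a' : A)
    (hQsym₁ : (Q (s, a)).IsSymm) (hQsym₂ : (Q (g s, a')).IsSymm)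
    (hequi : ∀ f : EuclideanSpace ℝ (Fin d) → ℝ, ContDiff ℝ 2 f →
      gen b Q a (f ∘ g) s = gen b Q a' f (g s)) :
    Q (g s, a') = jacMat g s * Q (s, a) * (jacMat g s)ᵀ
    ∧ ∀ k, b (g s, a') k
        = (jacMat g s).mulVec (fun i => b (s, a) i) k
          + (1 / 2) * (Q (s, a) * hessMat (fun x => g x k) s).trace := by
  have hgk : ∀ k, ContDiff ℝ 2 (fun x => g x k) := (contDiff_piLp 2).1 hg
  have hgs : DifferentiableAt ℝ g s := hg.differentiable two_ne_zero s
  have hcoord (k : Fin d) : gen b Q a (fun x => g x k) s = b (g s, a') k := by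
    rw [← gen_coord b Q a' k]
    exact hequi (fun y => y k) (contDiff_piLp_apply 2)
  refine ⟨?_, fun k => ?_⟩
  · ext i j
    have h := hequi (fun y => y i * y j) ((contDiff_piLp_apply 2).mul (contDiff_piLp_apply 2))
    rw [Function.comp_def, gen_fun_mul b Q a (hgk i) (hgk j),
      gen_fun_mul b Q a' (contDiff_piLp_apply 2) (contDiff_piLp_apply 2), hcoord i, hcoord j,
      gen_coord, gen_coord, gradient_component hgs, gradient_component hgs, gradient_coord,
      gradient_coord, hQsym₁.dotProduct_mulVec_comm, hQsym₂.dotProduct_mulVec_comm,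
      single_one_dotProduct, mulVec_single_one, col_apply] at h
    rw [mul_mul_apply, transpose_transpose, ← hQsym₂.apply, hQsym₁.dotProduct_mulVec_comm]
    linarith
  · rw [← hcoord k, gen_component b Q a hgs k]

/-- Finite coefficient-transport identities extracted from pointwise generator
equivariance: testing `(L^a(f∘g))(s) = (L^a' f)(g(s))` against all `C²` functions `f`
identifies how the drift and the diffusion matrix transform under `g`, including the
Itô correction term built from the Hessians of the components of `g`. -/
theorem stmt_14 {d : ℕ} (hd : 1 ≤ d) {A : Type*} [Nonempty A]
    (b : EuclideanSpace ℝ (Fin d) × A → EuclideanSpace ℝ (Fin d))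
    (Q : EuclideanSpace ℝ (Fin d) × A → Matrix (Fin d) (Fin d) ℝ)
    (g : EuclideanSpace ℝ (Fin d) → EuclideanSpace ℝ (Fin d))
    (hg : ContDiff ℝ 2 g)
    (s : EuclideanSpace ℝ (Fin d)) (a a' : A)
    (hQsym₁ : (Q (s, a)).IsSymm) (hQsym₂ : (Q (g s, a')).IsSymm)
    (hequi : ∀ f : EuclideanSpace ℝ (Fin d) → ℝ, ContDiff ℝ 2 f →
      gen b Q a (f ∘ g) s = gen b Q a' f (g s)) :
    Q (g s, a') = jacMat g s * Q (s, a) * (jacMat g s)ᵀ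
    ∧ ∀ k, b (g s, a') k
        = (jacMat g s).mulVec (fun i => b (s, a) i) k
          + (1 / 2) * (Q (s, a) * hessMat (fun x => g x k) s).trace :=
  stmt_14_general b Q g hg s a a' hQsym₁ hQsym₂ hequi
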